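/- Let C be a d-circuit and u an internal ×-gate of C that is not the output. Then for every ingoing edge i of u, R(i) equals the disjoint union over outgoing edges o of u of R(o), where R(e) denotes the set of tuples of R(C) whose proof-tree contains edge e. -/

import Mathlib

open Finset

/-- Labels of gates in a `{∪,×}`-circuit: inputs `x/d`, union gates, product gates. -/
inductive GLabel (X D : Type) where
  | inp (x : X) (d : D)
  | union
  | prod

/-- Restriction of a (partial) tuple to a set of attributes. -/
def restrictTup {X D : Type} [DecidableEq X] (τ : X → Option D) (A : Finset X) :
    X → Option D :=
  fun x => if x ∈ A then τ x else none

/-- A `{∪,×}`-circuit on attributes `X` and domain `D`: a finite DAG whose leaves are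
labeled by singleton relations `x/d`, internal gates by `∪` or `×` (with the syntactic
restrictions on attribute sets), together with its semantics `rel`. -/
structure Circuit (X D : Type) [Fintype X] [Fintype D] [DecidableEq X] [DecidableEq D] where
  Gate : Type
  fg : Fintype Gate
  dg : DecidableEq Gate
  children : Gate → Finset Gate
  label : Gate → GLabel X D
  output : Gate
  attrs : Gate → Finset X
  rel : Gate → Finset (X → Option D)
  depth : Gate → ℕ
  depth_lt : ∀ u, ∀ c ∈ children u, depth c < depth u
  inp_no_children : ∀ u x d, label u = .inp x d → children u = ∅
  internal_children_nonempty :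
    ∀ u, (label u = .union ∨ label u = .prod) → (children u).Nonempty
  attrs_inp : ∀ u x d, label u = .inp x d → attrs u = {x}
  attrs_internal :
    ∀ u, (label u = .union ∨ label u = .prod) → attrs u = (children u).biUnion attrs
  union_attrs : ∀ u, label u = .union → ∀ c ∈ children u, attrs c = attrs u
  prod_attrs : ∀ u, label u = .prod →
    ∀ c₁ ∈ children u, ∀ c₂ ∈ children u, c₁ ≠ c₂ → Disjoint (attrs c₁) (attrs c₂)
  rel_support : ∀ u, ∀ τ ∈ rel u, ∀ x, (τ x).isSome ↔ x ∈ attrs u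
  rel_inp : ∀ u x d, label u = .inp x d →
    ∀ τ, τ ∈ rel u ↔ τ = (fun y => if y = x then some d else none)
  rel_union : ∀ u, label u = .union → ∀ τ, τ ∈ rel u ↔ ∃ c ∈ children u, τ ∈ rel c
  rel_prod : ∀ u, label u = .prod →
    ∀ τ, τ ∈ rel u ↔ ((∀ x, (τ x).isSome ↔ x ∈ attrs u) ∧
      ∀ c ∈ children u, restrictTup τ (attrs c) ∈ rel c)

attribute [instance] Circuit.fg Circuit.dg

namespace Circuit

variable {X D : Type} [Fintype X] [Fintype D] [DecidableEq X] [DecidableEq D]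

/-- A d-circuit: every `∪`-gate is disjoint (its children define pairwise
disjoint relations). -/
def DisjointUnions (C : Circuit X D) : Prop :=
  ∀ u, C.label u = .union → ∀ c₁ ∈ C.children u, ∀ c₂ ∈ C.children u,
    c₁ ≠ c₂ → Disjoint (C.rel c₁) (C.rel c₂)

/-- The gates of the proof-tree of a tuple `τ`: the output gate is in, and a child `u`
of an included gate `v` is included iff the restriction of `τ` to the attributes of
the subcircuit rooted at `u` belongs to the relation of `u`. -/
inductive InPT (C : Circuit X D) (τ : X → Option D) : C.Gate → Prop
  | out : InPT C τ C.output
  | step {u v : C.Gate} : InPT C τ v → u ∈ C.children v →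
      restrictTup τ (C.attrs u) ∈ C.rel u → InPT C τ u

/-- An edge `e = (u, v)` (from child `u` to parent `v`) belongs to the proof-tree
of `τ`. -/
def EdgeInPT (C : Circuit X D) (τ : X → Option D) (e : C.Gate × C.Gate) : Prop :=
  C.InPT τ e.2 ∧ e.1 ∈ C.children e.2 ∧ restrictTup τ (C.attrs e.1) ∈ C.rel e.1

/-- The edges of the circuit, directed from child to parent. -/
def edges (C : Circuit X D) : Finset (C.Gate × C.Gate) :=
  Finset.univ.filter (fun e => e.1 ∈ C.children e.2)

/-- Outgoing edges of a gate `u` (towards its parents). -/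
def outEdges (C : Circuit X D) (u : C.Gate) : Finset (C.Gate × C.Gate) :=
  C.edges.filter (fun e => e.1 = u)

/-- Ingoing edges of a gate `u` (from its children). -/
def inEdges (C : Circuit X D) (u : C.Gate) : Finset (C.Gate × C.Gate) :=
  C.edges.filter (fun e => e.2 = u)

open Classical in
/-- `R(e)`: the set of tuples of `R(C)` whose proof-tree contains the edge `e`. -/
noncomputable def relEdge (C : Circuit X D) (e : C.Gate × C.Gate) :
    Finset (X → Option D) :=
  (C.rel C.output).filter (fun τ => C.EdgeInPT τ e)

/-- Soundness of an edge-weighting: flow conservation at non-output `∪`-gates, and at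
`×`-gates all ingoing edges carry the same weight, which (for non-output gates)
equals the sum of the outgoing weights. -/
def Sound (C : Circuit X D) (W : C.Gate × C.Gate → ℝ) : Prop :=
  (∀ u, C.label u = .union → u ≠ C.output →
      ∑ i ∈ C.inEdges u, W i = ∑ o ∈ C.outEdges u, W o) ∧
  (∀ u, C.label u = .prod →
      (∀ i ∈ C.inEdges u, ∀ i' ∈ C.inEdges u, W i = W i') ∧
      (u ≠ C.output → ∀ i ∈ C.inEdges u, W i = ∑ o ∈ C.outEdges u, W o))

end Circuit

/-!
If `u ≠ output` lies in the proof-tree of `τ`, it is entered from a parent in the proof-tree,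
and since `u` is a `×`-gate the restriction of `τ` to `u` determines those to all its children.
So the proof-tree of `τ` contains an ingoing edge of `u` iff it contains `u` iff it contains an
outgoing edge of `u`. In a d-circuit, proof-trees are trees: two proof-tree paths from the
output to `u` that diverge at a gate `v` give `v` two proof-tree children with a common
descendant, which is impossible below a `∪`-gate (disjoint relations on equal attributes) and
below a `×`-gate (disjoint nonempty attributes). Hence at most one outgoing edge of `u` is in
the proof-tree of `τ`.
-/

lemma restrictTup_restrictTup {X D : Type} [DecidableEq X] (τ : X → Option D) {A B : Finset X}
    (h : B ⊆ A) : restrictTup (restrictTup τ A) B = restrictTup τ B := by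
  funext x
  by_cases hx : x ∈ B
  · simp [restrictTup, hx, h hx]
  · simp [restrictTup, hx]

namespace Circuit

variable {X D : Type} [Fintype X] [Fintype D] [DecidableEq X] [DecidableEq D]
  {C : Circuit X D}

lemma mem_inEdges {u : C.Gate} {e : C.Gate × C.Gate} :
    e ∈ C.inEdges u ↔ e.1 ∈ C.children e.2 ∧ e.2 = u := by
  simp [inEdges, edges]

lemma mem_outEdges {u : C.Gate} {e : C.Gate × C.Gate} :
    e ∈ C.outEdges u ↔ e.1 ∈ C.children e.2 ∧ e.1 = u := by
  simp [outEdges, edges]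

lemma mem_relEdge {e : C.Gate × C.Gate} {τ : X → Option D} :
    τ ∈ C.relEdge e ↔ τ ∈ C.rel C.output ∧ C.EdgeInPT τ e := by
  simp [relEdge]

lemma attrs_subset_of_mem_children {c p : C.Gate} (hc : c ∈ C.children p) :
    C.attrs c ⊆ C.attrs p := by
  cases hl : C.label p
  case inp x d => simp [C.inp_no_children p x d hl] at hc
  all_goals
    rw [C.attrs_internal p (by simp [hl])]
    exact subset_biUnion_of_mem _ hc

lemma attrs_nonempty (u : C.Gate) : (C.attrs u).Nonempty := by
  cases hl : C.label u
  case inp x d => simp [C.attrs_inp u x d hl]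
  all_goals
    obtain ⟨c, hc⟩ := C.internal_children_nonempty u (by simp [hl])
    have := C.depth_lt u c hc
    exact (attrs_nonempty c).mono (attrs_subset_of_mem_children hc)
termination_by C.depth u

lemma restrictTup_mem_rel_of_prod {u c : C.Gate} {τ : X → Option D}
    (hlab : C.label u = .prod) (hc : c ∈ C.children u)
    (hu : restrictTup τ (C.attrs u) ∈ C.rel u) : restrictTup τ (C.attrs c) ∈ C.rel c := by
  have h := ((C.rel_prod u hlab _).mp hu).2 c hc
  rwa [restrictTup_restrictTup τ (attrs_subset_of_mem_children hc)] at h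

def Desc (C : Circuit X D) : C.Gate → C.Gate → Prop :=
  Relation.ReflTransGen fun a b => b ∈ C.children a

lemma Desc.depth_le {w v : C.Gate} (h : C.Desc w v) : C.depth v ≤ C.depth w := by
  induction h with
  | refl => exact le_rfl
  | tail _ hc ih => exact (C.depth_lt _ _ hc).le.trans ih

lemma Desc.attrs_subset {w v : C.Gate} (h : C.Desc w v) : C.attrs v ⊆ C.attrs w := by
  induction h with
  | refl => exact subset_rfl
  | tail _ hc ih => exact (attrs_subset_of_mem_children hc).trans ih

lemma not_desc_of_mem_children {c v : C.Gate} (hc : c ∈ C.children v) : ¬ C.Desc c v :=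
  fun h => (C.depth_lt v c hc).not_ge h.depth_le

def PTChild (C : Circuit X D) (τ : X → Option D) (a b : C.Gate) : Prop :=
  b ∈ C.children a ∧ restrictTup τ (C.attrs b) ∈ C.rel b

lemma desc_of_reflTransGen_ptChild {τ : X → Option D} {w v : C.Gate}
    (h : Relation.ReflTransGen (C.PTChild τ) w v) : C.Desc w v :=
  Relation.ReflTransGen.mono (fun _ _ (hab : C.PTChild τ _ _) => hab.1) _ _ h

lemma InPT.reflTransGen_ptChild {τ : X → Option D} {v : C.Gate} (h : C.InPT τ v) :
    Relation.ReflTransGen (C.PTChild τ) C.output v := by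
  induction h with
  | out => exact .refl
  | step _ hc hr ih => exact ih.tail ⟨hc, hr⟩

lemma InPT.exists_parent {τ : X → Option D} {v : C.Gate} (h : C.InPT τ v)
    (hv : v ≠ C.output) : ∃ p, C.InPT τ p ∧ C.PTChild τ p v := by
  cases h with
  | out => exact absurd rfl hv
  | step hp hc hr => exact ⟨_, hp, hc, hr⟩

/-- Under a `∪`-gate the two children have the same attributes, so the restriction of `τ`
would lie in two disjoint relations; under a `×`-gate the two children have disjoint
attributes, which both contain the (nonempty) attributes of the common descendant. -/
lemma ptChild_eq_of_desc (hd : C.DisjointUnions) {τ : X → Option D} {v w₁ w₂ u : C.Gate}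
    (h₁ : C.PTChild τ v w₁) (h₂ : C.PTChild τ v w₂) (hu₁ : C.Desc w₁ u)
    (hu₂ : C.Desc w₂ u) : w₁ = w₂ := by
  by_contra hne
  cases hl : C.label v with
  | inp x d => simpa [C.inp_no_children v x d hl] using h₁.1
  | union =>
    have hattrs : C.attrs w₁ = C.attrs w₂ := by
      rw [C.union_attrs v hl w₁ h₁.1, C.union_attrs v hl w₂ h₂.1]
    have h₁' := h₁.2
    rw [hattrs] at h₁'
    exact Finset.disjoint_left.mp (hd v hl w₁ h₁.1 w₂ h₂.1 hne) h₁' h₂.2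
  | prod =>
    obtain ⟨x, hx⟩ := attrs_nonempty u
    exact Finset.disjoint_left.mp (C.prod_attrs v hl w₁ h₁.1 w₂ h₂.1 hne)
      (hu₁.attrs_subset hx) (hu₂.attrs_subset hx)

/-- Follow both paths from `w` until they would diverge; `ptChild_eq_of_desc` forbids it. -/
lemma eq_of_reflTransGen_ptChild (hd : C.DisjointUnions) {τ : X → Option D}
    {w v₁ v₂ u : C.Gate} (h₁ : Relation.ReflTransGen (C.PTChild τ) w v₁)
    (h₂ : Relation.ReflTransGen (C.PTChild τ) w v₂)
    (hu₁ : C.PTChild τ v₁ u) (hu₂ : C.PTChild τ v₂ u) : v₁ = v₂ := by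
  induction h₁ using Relation.ReflTransGen.head_induction_on generalizing v₂ with
  | refl =>
    rcases Relation.ReflTransGen.cases_head h₂ with rfl | ⟨c, hc, hcv⟩
    · rfl
    · have hcu : c = u := ptChild_eq_of_desc hd hc hu₁
        ((desc_of_reflTransGen_ptChild hcv).tail hu₂.1) .refl
      subst hcu
      exact absurd (desc_of_reflTransGen_ptChild hcv) (not_desc_of_mem_children hu₂.1)
  | head hwc hcv ih =>
    rcases Relation.ReflTransGen.cases_head h₂ with rfl | ⟨c', hc', hc'v⟩
    · have hcu := ptChild_eq_of_desc hd hwc hu₂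
        ((desc_of_reflTransGen_ptChild hcv).tail hu₁.1) .refl
      subst hcu
      exact absurd (desc_of_reflTransGen_ptChild hcv) (not_desc_of_mem_children hu₁.1)
    · have hcc := ptChild_eq_of_desc hd hwc hc'
        ((desc_of_reflTransGen_ptChild hcv).tail hu₁.1)
        ((desc_of_reflTransGen_ptChild hc'v).tail hu₂.1)
      subst hcc
      exact ih hc'v hu₂

lemma EdgeInPT.parent_unique (hd : C.DisjointUnions) {τ : X → Option D} {u p₁ p₂ : C.Gate}
    (h₁ : C.EdgeInPT τ (u, p₁)) (h₂ : C.EdgeInPT τ (u, p₂)) : p₁ = p₂ :=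
  eq_of_reflTransGen_ptChild hd h₁.1.reflTransGen_ptChild h₂.1.reflTransGen_ptChild h₁.2 h₂.2

lemma edgeInPT_iff_exists_parent {τ : X → Option D} {u c : C.Gate}
    (hlab : C.label u = .prod) (hout : u ≠ C.output) (hc : c ∈ C.children u) :
    C.EdgeInPT τ (c, u) ↔ ∃ p, C.EdgeInPT τ (u, p) := by
  constructor
  · rintro ⟨hu, -, -⟩
    obtain ⟨p, hp, hpu⟩ := hu.exists_parent hout
    exact ⟨p, hp, hpu⟩
  · rintro ⟨p, hp, hpu, hu⟩
    exact ⟨hp.step hpu hu, hc, restrictTup_mem_rel_of_prod hlab hc hu⟩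

end Circuit

/-- For an internal (non-output) `×`-gate `u` of a d-circuit and every ingoing edge
`i` of `u`, `R(i)` is the disjoint union over outgoing edges `o` of `u` of `R(o)`. -/
theorem prodGate_inEdge_eq_outEdges {X D : Type} [Fintype X] [Fintype D]
    [DecidableEq X] [DecidableEq D]
    (C : Circuit X D) (hd : C.DisjointUnions)
    (u : C.Gate) (hlab : C.label u = GLabel.prod) (hout : u ≠ C.output) :
    (∀ i ∈ C.inEdges u, C.relEdge i = (C.outEdges u).biUnion C.relEdge) ∧
    (∀ e₁ ∈ C.outEdges u, ∀ e₂ ∈ C.outEdges u, e₁ ≠ e₂ →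
      Disjoint (C.relEdge e₁) (C.relEdge e₂)) := by
  refine ⟨fun ⟨c, v⟩ hi => ?_, fun ⟨u₁, p₁⟩ he₁ ⟨u₂, p₂⟩ he₂ hne => ?_⟩
  · obtain ⟨hc, rfl⟩ := Circuit.mem_inEdges.mp hi
    ext τ
    simp only [Circuit.mem_relEdge, Circuit.edgeInPT_iff_exists_parent hlab hout hc, mem_biUnion,
      Circuit.mem_outEdges]
    constructor
    · rintro ⟨hτ, p, hp⟩
      exact ⟨(v, p), ⟨hp.2.1, rfl⟩, hτ, hp⟩
    · rintro ⟨⟨_, p⟩, ⟨-, rfl⟩, hτ, hp⟩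
      exact ⟨hτ, p, hp⟩
  · obtain ⟨-, rfl⟩ := Circuit.mem_outEdges.mp he₁
    obtain ⟨-, rfl⟩ := Circuit.mem_outEdges.mp he₂
    refine Finset.disjoint_left.mpr fun τ h₁ h₂ => hne ?_
    rw [(Circuit.mem_relEdge.mp h₁).2.parent_unique hd (Circuit.mem_relEdge.mp h₂).2]
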